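/- Let U and V be finite sets and n ∈ ℕ. For a recollement (C, u : U → C, v : V → C) of (U, V), define the ℂ-linear map (C) : ℂ[Inj(U, Fin n)] → ℂ[Inj(V, Fin n)] by sending the basis vector e_f, for f ∈ Inj(U, Fin n), to the sum of e_{h∘v} over all h ∈ Inj(C, Fin n) with h ∘ u = f. Then: (i) each map (C) commutes with the S_n-actions, i.e. (C) is a morphism of S_n-representations; (ii) as (C, u, v) ranges over a set of representatives of the equivalence classes of recollements of (U, V), the maps (C) span the ℂ-vector space of all S_n-equivariant linear maps ℂ[Inj(U, Fin n)] → ℂ[Inj(V, Fin n)]; (iii) if n > |U| + |V|, these maps form a basis of that space. -/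

import Mathlib

/-!
The matrix entry of `(C)` at `(e_f, e_g)` is the number of injections `h : C ↪ Fin n`
extending `f` and `g`, and it is nonzero exactly when `C` is equivalent to the recollement
`im f ∪ im g` cut out by `(f, g)`. Any two such extensions differ by a permutation of `Fin n`,
so pairs `(f, g)` with the same recollement form a single `S_n`-orbit. Equivariant maps are
those whose matrices are constant on orbits, and the maps `(C)` are, up to nonzero scalars, the
indicators of the orbits that occur, whence spanning. When `n ≥ |U| + |V|` every recollement
occurs, so no `(C)` vanishes and their disjoint supports give linear independence.
-/

/-- A recollement of a pair of finite sets `U, V`: a finite set `C` together with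
injections `u : U ↪ C`, `v : V ↪ C` whose images cover `C`. -/
structure Recollement (U V : Type) : Type 1 where
  C : Type
  [fintypeC : Fintype C]
  u : U ↪ C
  v : V ↪ C
  covers : ∀ c : C, (∃ x, u x = c) ∨ (∃ y, v y = c)

attribute [instance] Recollement.fintypeC

/-- Two recollements are equivalent if there is a bijection of the underlying sets
commuting with the injections from `U` and from `V`. -/
def Recollement.Equivalent {U V : Type} (r₁ r₂ : Recollement U V) : Prop :=
  ∃ e : r₁.C ≃ r₂.C, (∀ x, e (r₁.u x) = r₂.u x) ∧ (∀ y, e (r₁.v y) = r₂.v y)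

/-- The action of `σ ∈ S_n` on the permutation representation `ℂ[Inj(U, Fin n)]`
(by postcomposition on the basis `{e_f}`). -/
noncomputable def permAct (U : Type) (n : ℕ) (σ : Equiv.Perm (Fin n)) :
    ((U ↪ Fin n) →₀ ℂ) →ₗ[ℂ] ((U ↪ Fin n) →₀ ℂ) :=
  (Finsupp.domLCongr (M := ℂ) (R := ℂ)
      (Equiv.embeddingCongr (Equiv.refl U) σ)).toLinearMap

open scoped Classical in
/-- The linear map `(C) : ℂ[Inj(U, Fin n)] → ℂ[Inj(V, Fin n)]` associated to a
recollement `(C, u, v)` of `(U, V)`: it sends the basis vector `e_f` to the sum of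
`e_{h ∘ v}` over all injections `h : C ↪ Fin n` with `h ∘ u = f`. -/
noncomputable def recMap (U V : Type) [Fintype U] [Fintype V] (n : ℕ)
    (r : Recollement U V) :
    ((U ↪ Fin n) →₀ ℂ) →ₗ[ℂ] ((V ↪ Fin n) →₀ ℂ) :=
  Finsupp.lift ((V ↪ Fin n) →₀ ℂ) ℂ (U ↪ Fin n) fun f =>
    ∑ h : r.C ↪ Fin n, if (∀ x, h (r.u x) = f x) then Finsupp.single (r.v.trans h) 1
      else 0

/-- The subspace of `S_n`-equivariant linear maps
`ℂ[Inj(U, Fin n)] → ℂ[Inj(V, Fin n)]`. -/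
noncomputable def equivariantMaps (U V : Type) (n : ℕ) :
    Submodule ℂ (((U ↪ Fin n) →₀ ℂ) →ₗ[ℂ] ((V ↪ Fin n) →₀ ℂ)) :=
  ⨅ σ : Equiv.Perm (Fin n),
    LinearMap.eqLocus
      (LinearMap.llcomp ℂ ((U ↪ Fin n) →₀ ℂ) ((V ↪ Fin n) →₀ ℂ)
        ((V ↪ Fin n) →₀ ℂ) (permAct V n σ))
      (LinearMap.lcomp ℂ ((V ↪ Fin n) →₀ ℂ) (permAct U n σ))

namespace Recollement

variable {U V W : Type}

def Lift (r : Recollement U V) (f : U ↪ W) (g : V ↪ W) : Type :=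
  {h : r.C ↪ W // (∀ x, h (r.u x) = f x) ∧ ∀ y, h (r.v y) = g y}

instance [Finite W] (r : Recollement U V) (f : U ↪ W) (g : V ↪ W) : Finite (r.Lift f g) :=
  Subtype.finite

theorem Lift.exists_perm {r : Recollement U V} {f f' : U ↪ W} {g g' : V ↪ W}
    (a : r.Lift f g) (b : r.Lift f' g') :
    ∃ σ : Equiv.Perm W, f.trans σ.toEmbedding = f' ∧ g.trans σ.toEmbedding = g' := by
  obtain ⟨σ, hσ⟩ := Equiv.Perm.exists_extending_pair a.1 b.1 a.1.injective b.1.injective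
  refine ⟨σ, Function.Embedding.ext fun x => ?_, Function.Embedding.ext fun y => ?_⟩
  · simp [← a.2.1 x, ← b.2.1 x, hσ]
  · simp [← a.2.2 y, ← b.2.2 y, hσ]

theorem card_lift_trans_perm (r : Recollement U V) (σ : Equiv.Perm W) (f : U ↪ W)
    (g : V ↪ W) :
    Nat.card (r.Lift (f.trans σ.toEmbedding) (g.trans σ.toEmbedding)) =
      Nat.card (r.Lift f g) :=
  Nat.card_congr <| .symm <|
    (Equiv.embeddingCongr (Equiv.refl _) σ).subtypeEquiv fun h => by simp

theorem card_lift_eq {r : Recollement U V} {f f' : U ↪ W} {g g' : V ↪ W}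
    (a : r.Lift f g) (b : r.Lift f' g') : Nat.card (r.Lift f g) = Nat.card (r.Lift f' g') := by
  obtain ⟨σ, rfl, rfl⟩ := a.exists_perm b
  exact (card_lift_trans_perm r σ f g).symm

theorem card_C_le [Fintype U] [Fintype V] (r : Recollement U V) :
    Fintype.card r.C ≤ Fintype.card U + Fintype.card V := by
  have : Function.Surjective (Sum.elim r.u r.v) := fun c => by
    rcases r.covers c with ⟨x, hx⟩ | ⟨y, hy⟩
    exacts [⟨.inl x, hx⟩, ⟨.inr y, hy⟩]
  simpa using Fintype.card_le_of_surjective _ this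

variable [Finite U] [Finite V]

noncomputable def ofEmbeddings (f : U ↪ W) (g : V ↪ W) : Recollement U V where
  C := ↥(Set.range f ∪ Set.range g)
  fintypeC := ((Set.finite_range f).union (Set.finite_range g)).fintype
  u := f.codRestrict _ fun x => Or.inl ⟨x, rfl⟩
  v := g.codRestrict _ fun y => Or.inr ⟨y, rfl⟩
  covers := by
    rintro ⟨c, ⟨x, rfl⟩ | ⟨y, rfl⟩⟩
    exacts [Or.inl ⟨x, rfl⟩, Or.inr ⟨y, rfl⟩]

theorem nonempty_lift_iff {r : Recollement U V} {f : U ↪ W} {g : V ↪ W} :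
    Nonempty (r.Lift f g) ↔ (ofEmbeddings f g).Equivalent r := by
  constructor
  · rintro ⟨h, hu, hv⟩
    have hrange : Set.range h = Set.range f ∪ Set.range g := by
      ext c
      constructor
      · rintro ⟨c, rfl⟩
        rcases r.covers c with ⟨x, rfl⟩ | ⟨y, rfl⟩
        exacts [Or.inl ⟨x, (hu x).symm⟩, Or.inr ⟨y, (hv y).symm⟩]
      · rintro (⟨x, rfl⟩ | ⟨y, rfl⟩)
        exacts [⟨_, hu x⟩, ⟨_, hv y⟩]
    let e := (Equiv.ofInjective h h.injective).trans (Equiv.setCongr hrange)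
    exact ⟨e.symm, fun x => e.symm_apply_eq.2 (Subtype.ext (hu x).symm),
      fun y => e.symm_apply_eq.2 (Subtype.ext (hv y).symm)⟩
  · rintro ⟨e, hu, hv⟩
    let e' : r.C ≃ ↥(Set.range f ∪ Set.range g) := e.symm
    refine ⟨⟨e'.toEmbedding.trans (Function.Embedding.subtype _), fun x => ?_, fun y => ?_⟩⟩
    · change (e' (r.u x) : W) = f x
      rw [show e' (r.u x) = (ofEmbeddings f g).u x from e.symm_apply_eq.2 (hu x).symm]
      rfl
    · change (e' (r.v y) : W) = g y
      rw [show e' (r.v y) = (ofEmbeddings f g).v y from e.symm_apply_eq.2 (hv y).symm]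
      rfl

theorem eq_of_nonempty_lift {R : Set (Recollement U V)}
    (hR : ∀ P : Recollement U V, ∃! r : R, P.Equivalent r.1) {r r' : R} {f : U ↪ W}
    {g : V ↪ W} (h : Nonempty (r.1.Lift f g)) (h' : Nonempty (r'.1.Lift f g)) : r = r' :=
  (hR (ofEmbeddings f g)).unique (nonempty_lift_iff.1 h) (nonempty_lift_iff.1 h')

end Recollement

noncomputable def entry {α β : Type*} (a : α) (b : β) :
    ((α →₀ ℂ) →ₗ[ℂ] (β →₀ ℂ)) →ₗ[ℂ] ℂ :=
  (Finsupp.lapply b).comp (LinearMap.applyₗ (Finsupp.single a 1))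

@[simp]
theorem entry_apply {α β : Type*} (a : α) (b : β) (T : (α →₀ ℂ) →ₗ[ℂ] (β →₀ ℂ)) :
    entry a b T = T (Finsupp.single a 1) b :=
  rfl

theorem ext_entry {α β : Type*} {T T' : (α →₀ ℂ) →ₗ[ℂ] (β →₀ ℂ)}
    (h : ∀ a b, entry a b T = entry a b T') : T = T' :=
  Finsupp.lhom_ext' fun a => LinearMap.ext_ring (Finsupp.ext (h a))

section PermRepresentation

variable {U V W : Type} {n : ℕ}

theorem permAct_single (σ : Equiv.Perm (Fin n)) (f : W ↪ Fin n) (c : ℂ) :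
    permAct W n σ (Finsupp.single f c) = Finsupp.single (f.trans σ.toEmbedding) c :=
  Finsupp.domLCongr_single _ _ _

theorem permAct_apply_trans (σ : Equiv.Perm (Fin n)) (w : (W ↪ Fin n) →₀ ℂ) (f : W ↪ Fin n) :
    permAct W n σ w (f.trans σ.toEmbedding) = w f := by
  rw [permAct, LinearEquiv.coe_coe, Finsupp.domLCongr_apply, Finsupp.domCongr_apply,
    Finsupp.equivMapDomain_apply]
  congr 1
  ext
  simp [Function.Embedding.congr]

theorem mem_equivariantMaps_iff {T : ((U ↪ Fin n) →₀ ℂ) →ₗ[ℂ] ((V ↪ Fin n) →₀ ℂ)} :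
    T ∈ equivariantMaps U V n ↔
      ∀ σ : Equiv.Perm (Fin n), (permAct V n σ).comp T = T.comp (permAct U n σ) := by
  simp only [equivariantMaps, Submodule.mem_iInf, LinearMap.mem_eqLocus,
    LinearMap.llcomp_apply', LinearMap.lcomp_apply']

theorem mem_equivariantMaps_iff_entry
    {T : ((U ↪ Fin n) →₀ ℂ) →ₗ[ℂ] ((V ↪ Fin n) →₀ ℂ)} :
    T ∈ equivariantMaps U V n ↔ ∀ (σ : Equiv.Perm (Fin n)) f g,
      entry (f.trans σ.toEmbedding) (g.trans σ.toEmbedding) T = entry f g T := by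
  rw [mem_equivariantMaps_iff]
  constructor
  · intro hT σ f g
    have := congr($(hT σ) (Finsupp.single f 1) (g.trans σ.toEmbedding))
    simp only [LinearMap.comp_apply, permAct_single, permAct_apply_trans] at this
    simp [this]
  · refine fun hT σ => ext_entry fun f g => ?_
    obtain ⟨g, rfl⟩ : ∃ g', g'.trans σ.toEmbedding = g := ⟨g.trans σ.symm.toEmbedding, by ext; simp⟩
    simp only [entry_apply, LinearMap.comp_apply, permAct_single, permAct_apply_trans]
    exact (hT σ f _).symm

end PermRepresentation

section RecollementMaps

variable {U V : Type} {n : ℕ}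

open Recollement

theorem entry_eq_of_lift {T : ((U ↪ Fin n) →₀ ℂ) →ₗ[ℂ] ((V ↪ Fin n) →₀ ℂ)}
    (hT : T ∈ equivariantMaps U V n) {r : Recollement U V} {f f' : U ↪ Fin n}
    {g g' : V ↪ Fin n} (a : r.Lift f g) (b : r.Lift f' g') : entry f g T = entry f' g' T := by
  obtain ⟨σ, rfl, rfl⟩ := a.exists_perm b
  exact (mem_equivariantMaps_iff_entry.1 hT σ f g).symm

variable [Fintype U] [Fintype V]

theorem entry_recMap (r : Recollement U V) (f : U ↪ Fin n) (g : V ↪ Fin n) :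
    entry f g (recMap U V n r) = Nat.card (r.Lift f g) := by
  classical
  have hsingle : ∀ h : r.C ↪ Fin n, Finsupp.single (r.v.trans h) (1 : ℂ) g =
      if ∀ y, h (r.v y) = g y then 1 else 0 := fun h => by
    simp [Finsupp.single_apply, Function.Embedding.ext_iff]
  rw [entry_apply, recMap, Finsupp.lift_apply, Finsupp.sum_single_index (by simp), one_smul,
    Finsupp.finsetSum_apply]
  simp_rw [apply_ite (fun w : (V ↪ Fin n) →₀ ℂ => w g), hsingle, Finsupp.coe_zero, Pi.zero_apply,
    ← ite_and]
  rw [Finset.sum_boole, Lift, Nat.card_eq_fintype_card, Fintype.card_subtype]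

theorem recMap_mem_equivariantMaps (r : Recollement U V) :
    recMap U V n r ∈ equivariantMaps U V n :=
  mem_equivariantMaps_iff_entry.2 fun σ f g => by
    simp only [entry_recMap, card_lift_trans_perm]

theorem entry_sum_smul_recMap {ι : Type*} (ρ : ι → Recollement U V) (s : Finset ι) (c : ι → ℂ)
    {f : U ↪ Fin n} {g : V ↪ Fin n} {i : ι} (hi : i ∈ s)
    (huniq : ∀ j ∈ s, Nonempty ((ρ j).Lift f g) → j = i) :
    entry f g (∑ j ∈ s, c j • recMap U V n (ρ j)) = c i * Nat.card ((ρ i).Lift f g) := by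
  rw [map_sum, Finset.sum_eq_single_of_mem i hi fun j hj hji => ?_, map_smul, entry_recMap,
    smul_eq_mul]
  have : IsEmpty ((ρ j).Lift f g) := not_nonempty_iff.1 fun h => hji (huniq j hj h)
  rw [map_smul, entry_recMap, Nat.card_of_isEmpty, Nat.cast_zero, smul_zero]

variable {R : Set (Recollement U V)}

theorem mem_span_recMap (hR : ∀ P : Recollement U V, ∃! r : R, P.Equivalent r.1)
    {T : ((U ↪ Fin n) →₀ ℂ) →ₗ[ℂ] ((V ↪ Fin n) →₀ ℂ)} (hT : T ∈ equivariantMaps U V n) :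
    T ∈ Submodule.span ℂ (Set.range fun r : R => recMap U V n r.1) := by
  classical
  let cls : (U ↪ Fin n) × (V ↪ Fin n) → R := fun p => (hR (ofEmbeddings p.1 p.2)).choose
  have lift_cls (p : (U ↪ Fin n) × (V ↪ Fin n)) : Nonempty ((cls p).1.Lift p.1 p.2) :=
    nonempty_lift_iff.2 (hR _).choose_spec.1
  let c : R → ℂ := fun r => if h : ∃ p, cls p = r then
    entry h.choose.1 h.choose.2 T / Nat.card (r.1.Lift h.choose.1 h.choose.2) else 0
  suffices T = ∑ r ∈ Finset.univ.image cls, c r • recMap U V n r.1 by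
    rw [this]
    exact Submodule.sum_mem _ fun r _ => Submodule.smul_mem _ _ (Submodule.subset_span ⟨r, rfl⟩)
  refine ext_entry fun f g => ?_
  rw [entry_sum_smul_recMap _ _ _ (Finset.mem_image_of_mem cls (Finset.mem_univ (f, g)))
    fun r _ h => eq_of_nonempty_lift hR h (lift_cls (f, g))]
  have hex : ∃ p, cls p = cls (f, g) := ⟨_, rfl⟩
  obtain ⟨a⟩ := lift_cls (f, g)
  obtain ⟨b⟩ := hex.choose_spec ▸ lift_cls hex.choose
  have : (Nat.card ((cls (f, g)).1.Lift f g) : ℂ) ≠ 0 := Nat.cast_ne_zero.2 Nat.card_pos.ne'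
  simp only [c, dif_pos hex]
  rw [entry_eq_of_lift hT b a, card_lift_eq b a, div_mul_cancel₀ _ this]

theorem linearIndependent_recMap (hR : ∀ P : Recollement U V, ∃! r : R, P.Equivalent r.1)
    (hn : ∀ r : R, Fintype.card r.1.C ≤ n) :
    LinearIndependent ℂ fun r : R => recMap U V n r.1 := by
  refine (linearIndependent_iff' (v := fun r : R => recMap U V n r.1)).2 fun s c hsum i hi => ?_
  obtain ⟨h⟩ : Nonempty (i.1.C ↪ Fin n) :=
    Function.Embedding.nonempty_of_card_le (by simpa using hn i)
  have lift_h : Nonempty (i.1.Lift (i.1.u.trans h) (i.1.v.trans h)) :=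
    ⟨h, fun _ => rfl, fun _ => rfl⟩
  have := congr(entry (i.1.u.trans h) (i.1.v.trans h) $hsum)
  rw [entry_sum_smul_recMap _ _ _ hi fun r _ hr => eq_of_nonempty_lift hR hr lift_h,
    map_zero] at this
  exact (mul_eq_zero.1 this).resolve_right (Nat.cast_ne_zero.2 Nat.card_pos.ne')

end RecollementMaps

/-- (i) Each map `(C)` is a morphism of `S_n`-representations;
(ii) as `(C, u, v)` ranges over a set `R` of representatives of the equivalence classes
of recollements of `(U, V)`, the maps `(C)` span the space of `S_n`-equivariant linear
maps `ℂ[Inj(U, Fin n)] → ℂ[Inj(V, Fin n)]`; (iii) if `n > |U| + |V|` they are moreover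
linearly independent (hence form a basis of that space). -/
theorem stmt6 (U V : Type) [Fintype U] [Fintype V] (n : ℕ)
    (R : Set (Recollement U V))
    (hR : ∀ P : Recollement U V, ∃! r : R, P.Equivalent r.1) :
    (∀ (r : Recollement U V) (σ : Equiv.Perm (Fin n)),
        (permAct V n σ).comp (recMap U V n r) =
          (recMap U V n r).comp (permAct U n σ)) ∧
      (Submodule.span ℂ (Set.range fun r : R => recMap U V n r.1) =
        equivariantMaps U V n) ∧
      (Fintype.card U + Fintype.card V < n →
        LinearIndependent ℂ fun r : R => recMap U V n r.1) := by
  refine ⟨fun r => mem_equivariantMaps_iff.1 (recMap_mem_equivariantMaps r), ?_,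
    fun hn => linearIndependent_recMap hR fun r => r.1.card_C_le.trans hn.le⟩
  refine le_antisymm ?_ fun T hT => mem_span_recMap hR hT
  rw [Submodule.span_le]
  rintro _ ⟨r, rfl⟩
  exact recMap_mem_equivariantMaps r.1
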